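/- arXiv:2110.11185 — 2 statements merged into one kernel-verified Lean document; each statement's English description precedes it below -/
import Mathlib

section
/- Let 0<ε◦<1/8 and suppose φ ∈ 𝔖(ε◦). Then there exists h◦ > 0, depending only on ε◦, such that for every θ◦ ∈ (−1,1) and every h with 0 < h ≤ h◦ and [θ◦−h, θ◦+h] ⊂ [−1,1], the rescaled phase φ_{θ◦,h}(θ) := (φ″(θ◦)h²)^{−1} ( φ(hθ+θ◦) − φ(θ◦) − φ′(θ◦)hθ ) belongs to 𝔖(ε◦). -/
open MeasureTheory Metric Set
open scoped ENNReal NNReal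

noncomputable section

abbrev Plane := EuclideanSpace ℝ (Fin 2)
abbrev SpaceTime := Plane × ℝ

/-- The Fourier transform `ĝ(ξ) = (2π)^{-2} ∫ e^{-iy·ξ} g(y) dy` on `ℝ²`. -/
def fhatP (g : Plane → ℂ) (ξ : Plane) : ℂ :=
  (((2 * Real.pi) ^ 2)⁻¹ : ℝ) •
    ∫ y : Plane, Complex.exp (-(Complex.I * ((inner ℝ y ξ : ℝ) : ℂ))) * g y

/-- The frequency region `A_λ(J)`. -/
def Aset (lam : ℝ) (J : Set ℝ) : Set Plane :=
  {w | lam / 4 ≤ w 0 ∧ w 0 ≤ 4 * lam ∧ w 1 / w 0 ∈ J}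

/-- The operator `T_λ^φ` (with cutoffs `β`, `β₀`). -/
def Tphase (β β₀ φ : ℝ → ℝ) (lam : ℝ) (g : Plane → ℂ) (z : SpaceTime) : ℂ :=
  ∫ w in Aset lam (Icc (-1 : ℝ) 1),
    Complex.exp (Complex.I *
        ((z.1 0 * w 0 + z.1 1 * w 1 + z.2 * (w 0 * φ (w 1 / w 0)) : ℝ) : ℂ)) *
      ((β (w 0 / lam) * β₀ (|w 1| / w 0) : ℝ) : ℂ) * fhatP g w

/-- The weight class `Ω(α)`: nonnegative measurable weights on `ℝ²×I` (extended by `0`)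
with `∫_{B(z,r)} ω ≤ r^α`. -/
def OmegaClass (α : ℝ) (ω : SpaceTime → ℝ) : Prop :=
  (∀ z, 0 ≤ ω z) ∧ Measurable ω ∧ (∀ z : SpaceTime, z.2 ∉ Ioo (1 : ℝ) 2 → ω z = 0) ∧
    ∀ (z : SpaceTime) (r : ℝ), 0 < r → (∫ y in ball z r, ω y) ≤ r ^ α

/-- The measure `ω dξ dt`. -/
def wMeasure (ω : SpaceTime → ℝ) : Measure SpaceTime :=
  volume.withDensity fun z => ENNReal.ofReal (ω z)

/-- The weighted norm `‖F‖_{L^q(ℝ²×I; ω)}`. -/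
def wNorm (q : ℝ≥0∞) (F : SpaceTime → ℂ) (ω : SpaceTime → ℝ) : ℝ≥0∞ :=
  eLpNorm F q (wMeasure ω)

/-- The `C³([-1,1])` norm. -/
def C3SupNorm (φ : ℝ → ℝ) : ℝ :=
  ∑ j ∈ Finset.range 4, sSup ((fun θ : ℝ => |iteratedDeriv j φ θ|) '' Icc (-1 : ℝ) 1)

/-- The class of phases `𝔖(ε)`. -/
def SClass (ε : ℝ) (φ : ℝ → ℝ) : Prop :=
  ContDiff ℝ 3 φ ∧ φ 0 = 0 ∧ deriv φ 0 = 0 ∧ C3SupNorm (fun θ => φ θ - θ ^ 2 / 2) ≤ ε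

/-- The fixed cutoffs: `β ∈ C_c^∞((1/2,2))` and `β₀ ∈ C^∞` supported in `[0,2]`. -/
def IsCutoffPair (β β₀ : ℝ → ℝ) : Prop :=
  ContDiff ℝ (⊤ : ℕ∞) β ∧ HasCompactSupport β ∧ tsupport β ⊆ Ioo (1 / 2 : ℝ) 2 ∧
    ContDiff ℝ (⊤ : ℕ∞) β₀ ∧ tsupport β₀ ⊆ Icc (0 : ℝ) 2

/-- The normalized phase `ψ₀(θ) = √(1+θ²) − 1`. -/
def psi0 (θ : ℝ) : ℝ := Real.sqrt (1 + θ ^ 2) - 1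

/-- The exponent `κ(α)`. -/
def kappa (α : ℝ) : ℝ := if α ≤ 1 then 2 * α else if α ≤ 2 then α + 1 else 3

/-- `(1/p, 1/q)` belongs to the region `P₂(α)`. -/
def memP2 (α : ℝ) (p q : ℝ≥0∞) : Prop :=
  if α ≤ 2 then
    1 / q ≤ 1 / p ∧ 1 / p < ENNReal.ofReal α / q ∧
      3 / p < 1 + ENNReal.ofReal (α - 1) / q
  else
    1 / q ≤ 1 / p ∧ 1 / p < ENNReal.ofReal α / q ∧
      3 / p < 1 + ENNReal.ofReal (2 * α - 3) / q ∧
      2 / p < 1 + ENNReal.ofReal (α - 2) / q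

/-- The normal vector `N(θ)` to the cone generated by `φ`. -/
def Nvec (φ : ℝ → ℝ) (θ : ℝ) : Fin 3 → ℝ := ![φ θ - θ * deriv φ θ, deriv φ θ, -1]

/-- `det(N(θ₁), N(θ₂), N(θ₃))`. -/
def det3 (φ : ℝ → ℝ) (θ₁ θ₂ θ₃ : ℝ) : ℝ :=
  Matrix.det (Matrix.of ![Nvec φ θ₁, Nvec φ θ₂, Nvec φ θ₃])

lemma abs_le_C3' (f : ℝ → ℝ)
    (hb : ∀ j < 4, BddAbove ((fun θ : ℝ => |iteratedDeriv j f θ|) '' Icc (-1:ℝ) 1))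
    {j : ℕ} (hj : j < 4) {θ : ℝ} (hθ : θ ∈ Icc (-1:ℝ) 1) :
    |iteratedDeriv j f θ| ≤ C3SupNorm f := by
  have h1 : |iteratedDeriv j f θ| ≤ sSup ((fun θ : ℝ => |iteratedDeriv j f θ|) '' Icc (-1:ℝ) 1) :=
    le_csSup (hb j hj) (mem_image_of_mem _ hθ)
  refine h1.trans ?_
  unfold C3SupNorm
  refine Finset.single_le_sum
    (f := fun i => sSup ((fun θ : ℝ => |iteratedDeriv i f θ|) '' Icc (-1:ℝ) 1))
    (fun i _ => Real.sSup_nonneg ?_) (Finset.mem_range.2 hj)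
  rintro x ⟨θ', _, rfl⟩; exact abs_nonneg _

lemma C3'_le (f : ℝ → ℝ) {b : ℝ} (hb : 0 ≤ b)
    (H : ∀ j < 4, ∀ θ ∈ Icc (-1:ℝ) 1, |iteratedDeriv j f θ| ≤ b) :
    C3SupNorm f ≤ 4 * b := by
  unfold C3SupNorm
  have : ∀ j ∈ Finset.range 4, sSup ((fun θ : ℝ => |iteratedDeriv j f θ|) '' Icc (-1:ℝ) 1) ≤ b := by
    intro j hj
    refine Real.sSup_le ?_ hb
    rintro x ⟨θ, hθ, rfl⟩
    exact H j (Finset.mem_range.1 hj) θ hθ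
  calc (∑ j ∈ Finset.range 4, sSup ((fun θ : ℝ => |iteratedDeriv j f θ|) '' Icc (-1:ℝ) 1))
      ≤ ∑ _j ∈ Finset.range 4, b := Finset.sum_le_sum this
    _ = 4 * b := by norm_num

set_option maxHeartbeats 2000000 in
/-- Lemma 2.1: the rescaled phase `φ_{θ◦,h}` stays in the class `𝔖(ε◦)` for
`0 < h ≤ h◦(ε◦)`. -/
theorem rescaled_phase_in_class (ε : ℝ) (hε0 : 0 < ε) (hε : ε < 1 / 8) :
    ∃ h₀ : ℝ, 0 < h₀ ∧ ∀ φ : ℝ → ℝ, SClass ε φ →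
      ∀ θ₀ ∈ Ioo (-1 : ℝ) 1, ∀ h : ℝ, 0 < h → h ≤ h₀ →
        Icc (θ₀ - h) (θ₀ + h) ⊆ Icc (-1 : ℝ) 1 →
        SClass ε fun θ => (iteratedDeriv 2 φ θ₀ * h ^ 2)⁻¹ *
          (φ (h * θ + θ₀) - φ θ₀ - deriv φ θ₀ * (h * θ)) := by
  refine ⟨1/8, by norm_num, ?_⟩
  intro φ hS θ₀ hθ₀ h hh hh8 hsub
  obtain ⟨hφ, hφ0, hφ'0, hC⟩ := hS
  -- derivative chain
  have h3 : Differentiable ℝ φ ∧ ContDiff ℝ 2 (deriv φ) := by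
    rw [show (3:WithTop ℕ∞) = 2+1 from rfl, contDiff_succ_iff_deriv] at hφ
    exact ⟨hφ.1, hφ.2.2⟩
  obtain ⟨hd1, hA⟩ := h3
  set A := deriv φ with hAdef
  have h2 : Differentiable ℝ A ∧ ContDiff ℝ 1 (deriv A) := by
    rw [show (2:WithTop ℕ∞) = 1+1 from rfl, contDiff_succ_iff_deriv] at hA
    exact ⟨hA.1, hA.2.2⟩
  obtain ⟨hd2, hB⟩ := h2
  set B := deriv A with hBdef
  have h1 : Differentiable ℝ B ∧ Continuous (deriv B) := contDiff_one_iff_deriv.1 hB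
  obtain ⟨hd3, hCc⟩ := h1
  set Cd := deriv B with hCdef
  -- derivatives of ψ = φ - θ²/2
  have hψ1 : ∀ θ : ℝ, HasDerivAt (fun θ : ℝ => φ θ - θ^2/2) (A θ - θ) θ := by
    intro θ
    have := (hd1 θ).hasDerivAt.sub ((hasDerivAt_pow 2 θ).div_const 2)
    refine this.congr_deriv ?_
    rw [hAdef]; norm_num
  have hψ2 : ∀ θ : ℝ, HasDerivAt (fun θ : ℝ => A θ - θ) (B θ - 1) θ := fun θ =>
    (hd2 θ).hasDerivAt.sub (hasDerivAt_id θ)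
  have hψ3 : ∀ θ : ℝ, HasDerivAt (fun θ : ℝ => B θ - 1) (Cd θ) θ := fun θ => by
    exact (hd3 θ).hasDerivAt.sub_const 1
  have e0 : iteratedDeriv 0 (fun θ : ℝ => φ θ - θ^2/2) = fun θ : ℝ => φ θ - θ^2/2 :=
    iteratedDeriv_zero
  have e1 : iteratedDeriv 1 (fun θ : ℝ => φ θ - θ^2/2) = fun θ : ℝ => A θ - θ := by
    rw [iteratedDeriv_one]; exact funext fun θ => (hψ1 θ).deriv
  have e2 : iteratedDeriv 2 (fun θ : ℝ => φ θ - θ^2/2) = fun θ : ℝ => B θ - 1 := by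
    rw [show (2:ℕ) = 1+1 from rfl, iteratedDeriv_succ, e1]
    exact funext fun θ => (hψ2 θ).deriv
  have e3 : iteratedDeriv 3 (fun θ : ℝ => φ θ - θ^2/2) = Cd := by
    rw [show (3:ℕ) = 2+1 from rfl, iteratedDeriv_succ, e2]
    exact funext fun θ => (hψ3 θ).deriv
  -- pointwise bounds
  have hbdd : ∀ j < 4, BddAbove ((fun θ : ℝ => |iteratedDeriv j (fun θ : ℝ => φ θ - θ^2/2) θ|)
      '' Icc (-1:ℝ) 1) := by
    intro j hj
    interval_cases j
    · rw [e0]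
      exact (isCompact_Icc.image (((hd1.continuous).sub (by continuity)).abs)).bddAbove
    · rw [e1]
      exact (isCompact_Icc.image (((hd2.continuous).sub continuous_id).abs)).bddAbove
    · rw [e2]
      exact (isCompact_Icc.image (((hd3.continuous).sub continuous_const).abs)).bddAbove
    · rw [e3]
      exact (isCompact_Icc.image hCc.abs).bddAbove
  have E : ∀ j < 4, ∀ θ ∈ Icc (-1:ℝ) 1,
      |iteratedDeriv j (fun θ : ℝ => φ θ - θ^2/2) θ| ≤ ε := fun j hj θ hθ =>
    (abs_le_C3' _ hbdd hj hθ).trans hC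
  have E2 : ∀ θ ∈ Icc (-1:ℝ) 1, |B θ - 1| ≤ ε := by
    intro θ hθ; have := E 2 (by norm_num) θ hθ; rwa [e2] at this
  have E3 : ∀ θ ∈ Icc (-1:ℝ) 1, |Cd θ| ≤ ε := by
    intro θ hθ; have := E 3 (by norm_num) θ hθ; rwa [e3] at this
  have hθ₀I : θ₀ ∈ Icc (-1:ℝ) 1 := Ioo_subset_Icc_self hθ₀
  have hB0 : (7:ℝ)/8 ≤ B θ₀ := by
    have := abs_le.1 (E2 θ₀ hθ₀I); linarith
  have hBpos : 0 < B θ₀ := by linarith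
  have eφ2 : iteratedDeriv 2 φ θ₀ = B θ₀ := by
    rw [show (2:ℕ) = 1+1 from rfl, iteratedDeriv_succ, iteratedDeriv_one]
  have hu : ∀ θ ∈ Icc (-1:ℝ) 1, h * θ + θ₀ ∈ Icc (-1:ℝ) 1 := by
    intro θ hθ
    refine hsub ⟨?_, ?_⟩
    · nlinarith [hθ.1, hθ.2]
    · nlinarith [hθ.1, hθ.2]
  rw [show (iteratedDeriv 2 φ θ₀ * h ^ 2)⁻¹ = (B θ₀ * h ^ 2)⁻¹ by rw [eφ2]]
  set c : ℝ := (B θ₀ * h ^ 2)⁻¹ with hcdef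
  set g : ℝ → ℝ := fun θ => c * (φ (h * θ + θ₀) - φ θ₀ - A θ₀ * (h * θ)) with hgdef
  have hlin : ∀ θ : ℝ, HasDerivAt (fun θ : ℝ => h * θ + θ₀) h θ := fun θ => by
    simpa using ((hasDerivAt_id θ).const_mul h).add_const θ₀
  set g1 : ℝ → ℝ := fun θ => c * (A (h * θ + θ₀) * h - A θ₀ * h) with hg1def
  set g2 : ℝ → ℝ := fun θ => c * (B (h * θ + θ₀) * h * h) with hg2def
  set g3 : ℝ → ℝ := fun θ => c * (Cd (h * θ + θ₀) * h * h * h) with hg3def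
  have hgd : ∀ θ : ℝ, HasDerivAt g (g1 θ) θ := by
    intro θ
    have h1 : HasDerivAt (fun θ : ℝ => φ (h * θ + θ₀)) (A (h * θ + θ₀) * h) θ :=
      (hd1 (h * θ + θ₀)).hasDerivAt.comp θ (hlin θ)
    have h2 : HasDerivAt (fun θ : ℝ => A θ₀ * (h * θ)) (A θ₀ * h) θ := by
      simpa using ((hasDerivAt_id θ).const_mul h).const_mul (A θ₀)
    exact ((h1.sub_const (φ θ₀)).sub h2).const_mul c
  have hg1d : ∀ θ : ℝ, HasDerivAt g1 (g2 θ) θ := by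
    intro θ
    have h1 : HasDerivAt (fun θ : ℝ => A (h * θ + θ₀)) (B (h * θ + θ₀) * h) θ :=
      by have := (hd2 (h * θ + θ₀)).hasDerivAt.comp θ (hlin θ); exact this
    exact ((h1.mul_const h).sub_const (A θ₀ * h)).const_mul c
  have hg2d : ∀ θ : ℝ, HasDerivAt g2 (g3 θ) θ := by
    intro θ
    have h1 : HasDerivAt (fun θ : ℝ => B (h * θ + θ₀)) (Cd (h * θ + θ₀) * h) θ :=
      by have := (hd3 (h * θ + θ₀)).hasDerivAt.comp θ (hlin θ); exact this
    exact ((h1.mul_const h).mul_const h).const_mul c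
  -- simplified forms
  have hh2 : (0:ℝ) < h ^ 2 := by positivity
  have hcpos : 0 < c := by rw [hcdef]; positivity
  have hch2 : c * h ^ 2 = (B θ₀)⁻¹ := by
    rw [hcdef]; field_simp
  have hdinv : (B θ₀)⁻¹ ≤ 8/7 := by
    rw [inv_le_comm₀ hBpos (by norm_num)]; linarith
  have hdinvpos : (0:ℝ) < (B θ₀)⁻¹ := by positivity
  -- bounds
  have b3 : ∀ θ ∈ Icc (-1:ℝ) 1, |g3 θ| ≤ ε / 7 := by
    intro θ hθ
    have hCu := E3 _ (hu θ hθ)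
    have hg3eq : g3 θ = (B θ₀)⁻¹ * h * Cd (h * θ + θ₀) := by
      rw [hg3def]; simp only []; rw [hcdef]; field_simp
    rw [hg3eq, abs_mul, abs_mul, abs_of_pos hdinvpos, abs_of_pos hh]
    calc (B θ₀)⁻¹ * h * |Cd (h * θ + θ₀)| ≤ (8/7) * (1/8) * ε := by
          apply mul_le_mul (by apply mul_le_mul hdinv hh8 hh.le (by norm_num)) hCu (abs_nonneg _)
          positivity
      _ = ε / 7 := by ring
  have b2 : ∀ θ ∈ Icc (-1:ℝ) 1, |g2 θ - 1| ≤ ε / 7 := by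
    intro θ hθ
    have hg2eq : g2 θ - 1 = (B θ₀)⁻¹ * (B (h * θ + θ₀) - B θ₀) := by
      rw [hg2def]; simp only []; rw [hcdef]; field_simp
    have hMVT : ‖B (h * θ + θ₀) - B θ₀‖ ≤ ε * ‖(h * θ + θ₀) - θ₀‖ :=
      (convex_Icc (-1:ℝ) 1).norm_image_sub_le_of_norm_deriv_le
        (fun x _ => hd3 x)
        (fun x hx => by simpa using E3 x hx) hθ₀I (hu θ hθ)
    have habs : |B (h * θ + θ₀) - B θ₀| ≤ ε * h := by
      have h1 : ‖(h * θ + θ₀) - θ₀‖ = h * |θ| := by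
        rw [show (h * θ + θ₀) - θ₀ = h * θ by ring]
        rw [Real.norm_eq_abs, abs_mul, abs_of_pos hh]
      have h2 : |θ| ≤ 1 := abs_le.2 ⟨hθ.1, hθ.2⟩
      calc |B (h * θ + θ₀) - B θ₀| ≤ ε * (h * |θ|) := by rw [← h1]; exact hMVT
        _ ≤ ε * h := by nlinarith [mul_nonneg hε0.le hh.le]
    rw [hg2eq, abs_mul, abs_of_pos hdinvpos]
    calc (B θ₀)⁻¹ * |B (h * θ + θ₀) - B θ₀| ≤ (8/7) * (ε * (1/8)) := by
          apply mul_le_mul hdinv _ (abs_nonneg _) (by norm_num)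
          calc |B (h * θ + θ₀) - B θ₀| ≤ ε * h := habs
            _ ≤ ε * (1/8) := by nlinarith
      _ = ε / 7 := by ring
  have h0mem : (0:ℝ) ∈ Icc (-1:ℝ) 1 := by norm_num
  have b1 : ∀ θ ∈ Icc (-1:ℝ) 1, |g1 θ - θ| ≤ ε / 7 := by
    intro θ hθ
    have hf1d : ∀ x : ℝ, HasDerivAt (fun θ : ℝ => g1 θ - θ) (g2 x - 1) x := fun x =>
      (hg1d x).sub (hasDerivAt_id x)
    have hMVT : ‖(g1 θ - θ) - (g1 0 - 0)‖ ≤ (ε/7) * ‖θ - 0‖ :=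
      (convex_Icc (-1:ℝ) 1).norm_image_sub_le_of_norm_deriv_le
        (fun x _ => (hf1d x).differentiableAt)
        (fun x hx => by rw [(hf1d x).deriv]; simpa using b2 x hx) h0mem hθ
    have hg10 : g1 0 = 0 := by rw [hg1def]; simp
    have h2 : |θ| ≤ 1 := abs_le.2 ⟨hθ.1, hθ.2⟩
    calc |g1 θ - θ| = ‖(g1 θ - θ) - (g1 0 - 0)‖ := by rw [hg10]; simp
      _ ≤ (ε/7) * ‖θ - (0:ℝ)‖ := hMVT
      _ = (ε/7) * |θ| := by simp
      _ ≤ ε / 7 := by nlinarith [mul_nonneg hε0.le (abs_nonneg θ)]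
  have hg0 : g 0 = 0 := by rw [hgdef]; simp
  have b0 : ∀ θ ∈ Icc (-1:ℝ) 1, |g θ - θ^2/2| ≤ ε / 7 := by
    intro θ hθ
    have hf0d : ∀ x : ℝ, HasDerivAt (fun θ : ℝ => g θ - θ^2/2) (g1 x - x) x := by
      intro x
      have := (hgd x).sub ((hasDerivAt_pow 2 x).div_const 2)
      refine this.congr_deriv ?_
      norm_num
    have hMVT : ‖(g θ - θ^2/2) - (g 0 - 0^2/2)‖ ≤ (ε/7) * ‖θ - 0‖ :=
      (convex_Icc (-1:ℝ) 1).norm_image_sub_le_of_norm_deriv_le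
        (fun x _ => (hf0d x).differentiableAt)
        (fun x hx => by rw [(hf0d x).deriv]; simpa using b1 x hx) h0mem hθ
    have h2 : |θ| ≤ 1 := abs_le.2 ⟨hθ.1, hθ.2⟩
    calc |g θ - θ^2/2| = ‖(g θ - θ^2/2) - (g 0 - 0^2/2)‖ := by rw [hg0]; norm_num
      _ ≤ (ε/7) * ‖θ - (0:ℝ)‖ := hMVT
      _ = (ε/7) * |θ| := by simp
      _ ≤ ε / 7 := by nlinarith [mul_nonneg hε0.le (abs_nonneg θ)]
  -- iterated derivatives of G = g - θ²/2
  have f1 : iteratedDeriv 1 (fun θ : ℝ => g θ - θ^2/2) = fun θ : ℝ => g1 θ - θ := by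
    rw [iteratedDeriv_one]
    refine funext fun θ => ?_
    have := (hgd θ).sub ((hasDerivAt_pow 2 θ).div_const 2)
    have h2 : HasDerivAt (fun θ : ℝ => g θ - θ^2/2) (g1 θ - θ) θ := by
      refine this.congr_deriv ?_
      norm_num
    exact h2.deriv
  have f2 : iteratedDeriv 2 (fun θ : ℝ => g θ - θ^2/2) = fun θ : ℝ => g2 θ - 1 := by
    rw [show (2:ℕ) = 1+1 from rfl, iteratedDeriv_succ, f1]
    exact funext fun θ => ((hg1d θ).sub (hasDerivAt_id θ)).deriv
  have f3 : iteratedDeriv 3 (fun θ : ℝ => g θ - θ^2/2) = g3 := by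
    rw [show (3:ℕ) = 2+1 from rfl, iteratedDeriv_succ, f2]
    refine funext fun θ => ?_
    have : HasDerivAt (fun θ : ℝ => g2 θ - 1) (g3 θ) θ := by
      simpa using (hg2d θ).sub_const 1
    exact this.deriv
  -- assemble SClass
  refine ⟨?_, ?_, ?_, ?_⟩
  · -- ContDiff ℝ 3 g
    apply ContDiff.mul contDiff_const
    refine ContDiff.sub (ContDiff.sub ?_ contDiff_const) ?_
    · exact hφ.comp ((contDiff_const.mul contDiff_id).add contDiff_const)
    · exact contDiff_const.mul (contDiff_const.mul contDiff_id)
  · exact hg0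
  · rw [(hgd 0).deriv, hg1def]; simp
  · have := C3'_le (fun θ : ℝ => g θ - θ^2/2) (b := ε/7) (by positivity) ?_
    · linarith
    · intro j hj θ hθ
      interval_cases j
      · rw [iteratedDeriv_zero]; exact b0 θ hθ
      · rw [f1]; exact b1 θ hθ
      · rw [f2]; exact b2 θ hθ
      · rw [f3]; exact b3 θ hθ
end
end

section
/- Let d ≥ 2, let V be a k-dimensional linear subspace of ℝ^{d+1} with 1 ≤ k ≤ d+1, let 0<α≤k, and let μ be a Borel measure on ℝ^{d+1} supported on V with μ(B(z,ρ)) ≤ ⟨μ⟩_α ρ^α for all z,ρ. Let p,q ∈ [1,∞) and assume there is a constant C such that ‖Af‖_{L^q(ℝ^d×I; dν)} ≤ C ⟨ν⟩_α^{1/q} ‖f‖_{L^p(ℝ^d)} holds, with this same constant C, for every α-dimensional measure ν on ℝ^{d+1} and every continuous compactly supported f on ℝ^d. Then, writing each point z ∈ ℝ^{d+1} as z = z₁ + z₂ with z₁ ∈ V and z₂ ∈ V^⊥, and identifying ℝ^{d+1} = ℝ^d × ℝ so that Af is a function on ℝ^{d+1}, one has for every continuous compactly supported f: ‖ sup_{z₂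 ∈ V^⊥} χ_{B(0,1)×I}(z₁+z₂) |Af(z₁+z₂)| ‖_{L^q(V, dμ)} ≤ C ⟨μ⟩_α^{1/q} ‖f‖_{L^p(ℝ^d)}, where B(0,1) is the open unit ball in ℝ^d and the L^q norm is taken in the variable z₁ ∈ V. -/
open MeasureTheory Metric Set
open scoped ENNReal NNReal

noncomputable section

abbrev Euc (n : ℕ) := EuclideanSpace ℝ (Fin n)

/-- The quantity `⟨ν⟩_α = sup_{z,ρ>0} ρ^{-α} ν(B(z,ρ))`. -/
def dimConst {X : Type*} [PseudoMetricSpace X] [MeasurableSpace X] (α : ℝ) (ν : Measure X) :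
    ℝ≥0∞ :=
  ⨆ (z : X) (ρ : ℝ) (_ : 0 < ρ), ν (ball z ρ) / ENNReal.ofReal (ρ ^ α)

/-- `ν` is an `α`-dimensional measure. -/
def IsAlphaDim {X : Type*} [PseudoMetricSpace X] [MeasurableSpace X] (α : ℝ) (ν : Measure X) :
    Prop :=
  ∃ C : ℝ≥0, ∀ (z : X) (ρ : ℝ), 0 < ρ → ν (ball z ρ) ≤ (C : ℝ≥0∞) * ENNReal.ofReal (ρ ^ α)

/-- Spherical average with respect to the normalized surface measure on `S^{d-1}`. -/
def sphAvg (d : ℕ) (f : Euc d → ℝ) (x : Euc d) (t : ℝ) : ℝ :=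
  ⨍ y in sphere (0 : Euc d) 1, f (x - t • y) ∂(μH[(d : ℝ) - 1])

/-- The first `d` coordinates of a point of `ℝ^{d+1}`. -/
def headPart (d : ℕ) (z : Euc (d + 1)) : Euc d :=
  (EuclideanSpace.equiv (Fin d) ℝ).symm fun i => z i.castSucc

/-- The spherical average regarded as a function on `ℝ^{d+1} = ℝ^d × ℝ`. -/
def sphAvg' (d : ℕ) (f : Euc d → ℝ) (z : Euc (d + 1)) : ℝ :=
  sphAvg d f (headPart d z) (z (Fin.last d))

lemma sphAvg_continuous (d : ℕ) (f : Euc d → ℝ) (hf : Continuous f)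
    (hm : μH[(d : ℝ) - 1] (sphere (0 : Euc d) 1) ≠ ∞) (M : ℝ) (hM : ∀ y, ‖f y‖ ≤ M) :
    Continuous (fun p : Euc d × ℝ => sphAvg d f p.1 p.2) := by
  have : Continuous fun p : Euc d × ℝ =>
      ∫ y in sphere (0 : Euc d) 1, f (p.1 - p.2 • y) ∂(μH[(d : ℝ) - 1]) := by
    haveI : IsFiniteMeasure ((μH[(d : ℝ) - 1]).restrict (sphere (0 : Euc d) 1)) := by
      constructor
      rw [Measure.restrict_apply_univ]
      exact lt_top_iff_ne_top.2 hm
    apply continuous_of_dominated (bound := fun _ => M)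
    · intro p
      exact (hf.comp (continuous_const.sub (continuous_id.const_smul p.2))).aestronglyMeasurable
    · intro p
      exact Filter.Eventually.of_forall fun y => hM _
    · exact integrable_const (μ := (μH[(d : ℝ) - 1]).restrict (sphere (0 : Euc d) 1)) M
    · exact Filter.Eventually.of_forall fun y =>
        hf.comp (continuous_fst.sub (continuous_snd.smul continuous_const))
  have heq : (fun p : Euc d × ℝ => sphAvg d f p.1 p.2) = fun p =>
      (μH[(d : ℝ) - 1] (sphere (0 : Euc d) 1)).toReal⁻¹ •
        ∫ y in sphere (0 : Euc d) 1, f (p.1 - p.2 • y) ∂(μH[(d : ℝ) - 1]) := by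
    funext p; rw [sphAvg, setAverage_eq]; rfl
  rw [heq]
  exact this.const_smul ((μH[(d : ℝ) - 1] (sphere (0 : Euc d) 1)).toReal⁻¹)

lemma sphAvg_bound (d : ℕ) (f : Euc d → ℝ) (M : ℝ) (hM : ∀ y, ‖f y‖ ≤ M) (hM0 : 0 ≤ M)
    (hm : μH[(d : ℝ) - 1] (sphere (0 : Euc d) 1) ≠ ∞) (x : Euc d) (t : ℝ) :
    |sphAvg d f x t| ≤ M := by
  set m := μH[(d : ℝ) - 1] (sphere (0 : Euc d) 1) with hmdef
  rw [sphAvg, setAverage_eq]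
  rcases eq_or_ne m.toReal 0 with h0 | h0
  · rw [measureReal_def, ← hmdef, h0, inv_zero, zero_smul, abs_zero]; exact hM0
  · have hfin : m < ∞ := lt_top_iff_ne_top.2 hm
    have hint : ‖∫ y in sphere (0 : Euc d) 1, f (x - t • y) ∂(μH[(d : ℝ) - 1])‖ ≤
        M * m.toReal := by
      apply norm_setIntegral_le_of_norm_le_const_ae hfin
      exact Filter.Eventually.of_forall fun y => hM _
    have hpos : 0 < m.toReal := lt_of_le_of_ne ENNReal.toReal_nonneg (Ne.symm h0)
    rw [smul_eq_mul, abs_mul, abs_inv, measureReal_def, abs_of_nonneg ENNReal.toReal_nonneg, ← hmdef]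
    calc m.toReal⁻¹ * |∫ y in sphere (0 : Euc d) 1, f (x - t • y) ∂(μH[(d : ℝ) - 1])|
        ≤ m.toReal⁻¹ * (M * m.toReal) := by
          rw [Real.norm_eq_abs] at hint
          exact mul_le_mul_of_nonneg_left hint (inv_nonneg.2 ENNReal.toReal_nonneg)
      _ = M := by field_simp

/-- Lemma 3.5: from the uniform `L^p → L^q(dν)` estimate for the average over all
`α`-dimensional measures one deduces the corresponding maximal estimate along the
orthogonal complement of a `k`-dimensional subspace `V`, for measures on `V`. -/
theorem linearization_maximal_estimate
    (d k : ℕ) (hd : 2 ≤ d) (hk1 : 1 ≤ k) (hk2 : k ≤ d + 1)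
    (α : ℝ) (hα0 : 0 < α) (hαk : α ≤ (k : ℝ))
    (V : Submodule ℝ (Euc (d + 1))) (hV : Module.finrank ℝ V = k)
    (μ : Measure (Euc (d + 1))) (hμV : μ ((V : Set (Euc (d + 1)))ᶜ) = 0)
    (hμdim : IsAlphaDim α μ)
    (hμball : ∀ (z : Euc (d + 1)) (ρ : ℝ), 0 < ρ →
      μ (ball z ρ) ≤ dimConst α μ * ENNReal.ofReal (ρ ^ α))
    (p q : ℝ) (hp : 1 ≤ p) (hq : 1 ≤ q) (C : ℝ≥0)
    (hbound : ∀ ν : Measure (Euc (d + 1)), IsAlphaDim α ν →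
      ∀ f : Euc d → ℝ, Continuous f → HasCompactSupport f →
        eLpNorm (sphAvg' d f) (ENNReal.ofReal q)
            (ν.restrict {z : Euc (d + 1) | z (Fin.last d) ∈ Ioo (1 : ℝ) 2}) ≤
          (C : ℝ≥0∞) * dimConst α ν ^ (1 / q) * eLpNorm f (ENNReal.ofReal p) volume) :
    ∀ f : Euc d → ℝ, Continuous f → HasCompactSupport f →
      eLpNorm
          (fun z₁ : Euc (d + 1) => ⨆ z₂ : V.orthogonal,
            Set.indicator
              {z : Euc (d + 1) | ‖headPart d z‖ < 1 ∧ z (Fin.last d) ∈ Ioo (1 : ℝ) 2}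
              (fun z => |sphAvg' d f z|) (z₁ + (z₂ : Euc (d + 1))))
          (ENNReal.ofReal q) μ ≤
        (C : ℝ≥0∞) * dimConst α μ ^ (1 / q) * eLpNorm f (ENNReal.ofReal p) volume := by
  intro f hf hfc
  haveI : Nonempty V.orthogonal := ⟨0⟩
  have hq0 : (0 : ℝ) < q := lt_of_lt_of_le one_pos hq
  have hqne : q ≠ 0 := ne_of_gt hq0
  set E : Set (Euc (d + 1)) :=
    {z : Euc (d + 1) | ‖headPart d z‖ < 1 ∧ z (Fin.last d) ∈ Ioo (1 : ℝ) 2} with hE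
  set m := μH[(d : ℝ) - 1] (sphere (0 : Euc d) 1) with hm
  by_cases hdeg : m.toReal = 0
  · have hz : ∀ z, sphAvg' d f z = 0 := by
      intro z; rw [sphAvg', sphAvg, setAverage_eq, measureReal_def, ← hm, hdeg, inv_zero, zero_smul]
    have hfun : (fun z₁ : Euc (d + 1) => ⨆ z₂ : V.orthogonal,
        E.indicator (fun z => |sphAvg' d f z|) (z₁ + (z₂ : Euc (d + 1)))) = fun _ => (0 : ℝ) := by
      funext z₁
      have h0 : E.indicator (fun z => |sphAvg' d f z|) = fun _ => (0 : ℝ) := by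
        funext v; simp [Set.indicator_apply, hz]
      rw [h0]
      exact ciSup_const
    rw [hfun, eLpNorm_zero']
    exact zero_le
  · have hmtop : m ≠ ∞ := by
      intro h; rw [hm] at hdeg; rw [← hm] at hdeg; rw [h] at hdeg; simp at hdeg
    obtain ⟨M, hM⟩ := hfc.exists_bound_of_continuous hf
    have hM0 : 0 ≤ M := le_trans (norm_nonneg (f 0)) (hM 0)
    have hAfc : Continuous (sphAvg' d f) := by
      have h1 := sphAvg_continuous d f hf hmtop M hM
      have hhead : Continuous (headPart d) :=
        (EuclideanSpace.equiv (Fin d) ℝ).symm.continuous.comp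
          (continuous_pi fun i => (EuclideanSpace.proj (i.castSucc : Fin (d + 1))).continuous)
      exact h1.comp (hhead.prodMk (EuclideanSpace.proj (Fin.last d)).continuous)
    have hAfb : ∀ z, |sphAvg' d f z| ≤ M := fun z => sphAvg_bound d f M hM hM0 hmtop _ _
    set Af := sphAvg' d f with hAfdef
    set S : Set (Euc (d + 1)) := {z : Euc (d + 1) | z (Fin.last d) ∈ Ioo (1 : ℝ) 2} with hS
    have hSmeas : MeasurableSet S :=
      (EuclideanSpace.proj (Fin.last d)).continuous.measurable measurableSet_Ioo
    have hEopen : IsOpen E := by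
      rw [hE, setOf_and]
      exact (isOpen_lt (continuous_norm.comp
        ((EuclideanSpace.equiv (Fin d) ℝ).symm.continuous.comp
          (continuous_pi fun i => (EuclideanSpace.proj (i.castSucc : Fin (d + 1))).continuous)))
          continuous_const).inter
        (isOpen_Ioo.preimage (EuclideanSpace.proj (Fin.last d)).continuous)
    have hEmeas : MeasurableSet E := hEopen.measurableSet
    have hES : E ⊆ S := fun z hz => hz.2
    set w : ℕ → V.orthogonal := TopologicalSpace.denseSeq V.orthogonal with hwdef
    have hw : DenseRange w := TopologicalSpace.denseRange_denseSeq V.orthogonal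
    set Fr : ℕ → Euc (d + 1) → ℝ :=
      fun n z₁ => E.indicator (fun z => |Af z|) (z₁ + (w n : Euc (d + 1))) with hFr
    have hFrmeas : ∀ n, Measurable (Fr n) := fun n =>
      ((hAfc.abs.measurable).indicator hEmeas).comp (measurable_add_const _)
    have hFrnonneg : ∀ n z₁, 0 ≤ Fr n z₁ := fun n z₁ =>
      Set.indicator_nonneg (fun _ _ => abs_nonneg _) _
    have hFrle : ∀ n z₁, Fr n z₁ ≤ M := by
      intro n z₁
      simp only [hFr]
      by_cases h : z₁ + (w n : Euc (d + 1)) ∈ E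
      · rw [Set.indicator_of_mem h]; exact hAfb _
      · rw [Set.indicator_of_notMem h]; exact hM0
    -- Step 1 : pointwise domination by countable sup
    have key1 : ∀ z₁ : Euc (d + 1), (‖⨆ z₂ : V.orthogonal,
        E.indicator (fun z => |Af z|) (z₁ + (z₂ : Euc (d + 1)))‖₊ : ℝ≥0∞) ≤
        ⨆ n, ENNReal.ofReal (Fr n z₁) := by
      intro z₁
      set c := ⨆ n, ENNReal.ofReal (Fr n z₁) with hc
      have hcne : c ≠ ∞ :=
        ne_top_of_le_ne_top ENNReal.ofReal_ne_top
          (iSup_le fun n => ENNReal.ofReal_le_ofReal (hFrle n z₁))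
      have hFFb : ∀ z₂ : V.orthogonal,
          E.indicator (fun z => |Af z|) (z₁ + (z₂ : Euc (d + 1))) ≤ M := by
        intro z₂
        by_cases h : z₁ + (z₂ : Euc (d + 1)) ∈ E
        · rw [Set.indicator_of_mem h]; exact hAfb _
        · rw [Set.indicator_of_notMem h]; exact hM0
      have hFFnn : ∀ z₂ : V.orthogonal,
          0 ≤ E.indicator (fun z => |Af z|) (z₁ + (z₂ : Euc (d + 1))) := fun z₂ =>
        Set.indicator_nonneg (fun _ _ => abs_nonneg _) _
      have hbdd : BddAbove (Set.range fun z₂ : V.orthogonal =>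
          E.indicator (fun z => |Af z|) (z₁ + (z₂ : Euc (d + 1)))) := by
        refine ⟨M, ?_⟩; rintro _ ⟨z₂, rfl⟩; exact hFFb z₂
      have hGnn : 0 ≤ ⨆ z₂ : V.orthogonal,
          E.indicator (fun z => |Af z|) (z₁ + (z₂ : Euc (d + 1))) :=
        le_trans (hFFnn ⟨0, V.orthogonal.zero_mem⟩) (le_ciSup hbdd _)
      rw [← enorm_eq_nnnorm, Real.enorm_eq_ofReal hGnn, ENNReal.ofReal_le_iff_le_toReal hcne]
      refine ciSup_le fun z₂ => ?_
      by_contra hlt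
      push_neg at hlt
      have hct : (0 : ℝ) ≤ c.toReal := ENNReal.toReal_nonneg
      have hmemE : z₁ + (z₂ : Euc (d + 1)) ∈ E ∧ c.toReal < |Af (z₁ + (z₂ : Euc (d + 1)))| := by
        by_cases hE' : z₁ + (z₂ : Euc (d + 1)) ∈ E
        · rw [Set.indicator_of_mem hE'] at hlt; exact ⟨hE', hlt⟩
        · rw [Set.indicator_of_notMem hE'] at hlt; linarith
      have hUopen : IsOpen {v : Euc (d + 1) | v ∈ E ∧ c.toReal < |Af v|} := by
        rw [setOf_and]
        exact hEopen.inter (isOpen_lt continuous_const hAfc.abs)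
      have hU2 : IsOpen ((fun z₂' : V.orthogonal => z₁ + (z₂' : Euc (d + 1))) ⁻¹'
          {v : Euc (d + 1) | v ∈ E ∧ c.toReal < |Af v|}) :=
        hUopen.preimage (continuous_const.add continuous_subtype_val)
      obtain ⟨n, hn⟩ := hw.exists_mem_open hU2 ⟨z₂, hmemE⟩
      have h1 : c.toReal < Fr n z₁ := by
        simp only [hFr]
        rw [Set.indicator_of_mem hn.1]; exact hn.2
      have h2 : Fr n z₁ ≤ c.toReal := by
        rw [← ENNReal.ofReal_le_iff_le_toReal hcne]
        exact le_iSup (fun n => ENNReal.ofReal (Fr n z₁)) n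
      linarith
    -- Step 2 : sup and rpow commute
    have hsup_rpow : ∀ (a : ℕ → ℝ≥0∞), (⨆ n, a n) ^ q ≤ ⨆ n, a n ^ q := by
      intro a
      have h1 : (⨆ n, a n) ≤ (⨆ n, a n ^ q) ^ (1 / q) := by
        refine iSup_le fun n => ?_
        have hrw : a n = (a n ^ q) ^ (1 / q) := by
          rw [← ENNReal.rpow_mul, mul_one_div_cancel hqne, ENNReal.rpow_one]
        rw [hrw]
        exact ENNReal.rpow_le_rpow (le_iSup (fun n => a n ^ q) n) (by positivity)
      calc (⨆ n, a n) ^ q ≤ ((⨆ n, a n ^ q) ^ (1 / q)) ^ q :=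
            ENNReal.rpow_le_rpow h1 hq0.le
        _ = ⨆ n, a n ^ q := by
            rw [← ENNReal.rpow_mul, one_div_mul_cancel hqne, ENNReal.rpow_one]
    set R := (C : ℝ≥0∞) * dimConst α μ ^ (1 / q) * eLpNorm f (ENNReal.ofReal p) volume with hR
    -- Step 3 : the bound for each finite selection
    have hofq0 : ENNReal.ofReal q ≠ 0 := by
      simp only [ne_eq, ENNReal.ofReal_eq_zero, not_le]; exact hq0
    have keyN : ∀ N : ℕ,
        ∫⁻ z₁, (⨆ n, ⨆ (_ : n ≤ N), ENNReal.ofReal (Fr n z₁) ^ q) ∂μ ≤ R ^ q := by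
      intro N
      set idx : ℕ → ℕ := fun n => min n N with hidx
      set B : ℕ → Set (Euc (d + 1)) := fun n => {z₁ | ∀ m ≤ N, Fr m z₁ ≤ Fr (idx n) z₁} with hB
      have hBmeas : ∀ n, MeasurableSet (B n) := by
        intro n
        have hrw : B n = ⋂ m, ⋂ (_ : m ≤ N), {z₁ | Fr m z₁ ≤ Fr (idx n) z₁} := by
          ext z₁; simp [hB]
        rw [hrw]
        exact MeasurableSet.iInter fun m_ => MeasurableSet.iInter fun _ =>
          measurableSet_le (hFrmeas m_) (hFrmeas _)
      set A := disjointed B with hA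
      have hAmeas : ∀ n, MeasurableSet (A n) := MeasurableSet.disjointed hBmeas
      have hAdisj : Pairwise (Function.onFun Disjoint A) := disjoint_disjointed B
      have hAB : ∀ n, A n ⊆ B n := disjointed_subset B
      have hBunion : ⋃ n, B n = univ := by
        ext z₁
        simp only [mem_iUnion, mem_univ, iff_true]
        obtain ⟨n₀, hn₀mem, hn₀⟩ := Finset.exists_max_image (Finset.range (N + 1))
          (fun m_ => Fr m_ z₁) ⟨0, Finset.mem_range.2 (Nat.succ_pos N)⟩
        refine ⟨n₀, ?_⟩
        have h2 : idx n₀ = n₀ := min_eq_left (Nat.lt_succ_iff.1 (Finset.mem_range.1 hn₀mem))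
        simp only [hB, mem_setOf_eq, h2]
        intro m_ hm_
        exact hn₀ m_ (Finset.mem_range.2 (Nat.lt_succ_of_le hm_))
      have hAunion : ⋃ n, A n = univ := by rw [hA, iUnion_disjointed, hBunion]
      set T : ℕ → Euc (d + 1) → Euc (d + 1) :=
        fun n z₁ => z₁ + (w (idx n) : Euc (d + 1)) with hT
      have hTmeas : ∀ n, Measurable (T n) := fun n => measurable_add_const _
      set ν : Measure (Euc (d + 1)) :=
        Measure.sum (fun n => (μ.restrict (A n)).map (T n)) with hν
      have hproj : ∀ u : Euc (d + 1), ‖(V.orthogonalProjectionOnto u : Euc (d + 1))‖ ≤ ‖u‖ := by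
        intro u
        calc ‖(V.orthogonalProjectionOnto u : Euc (d + 1))‖ = ‖V.orthogonalProjectionOnto u‖ := rfl
          _ ≤ ‖V.orthogonalProjectionOnto‖ * ‖u‖ := (V.orthogonalProjectionOnto).le_opNorm u
          _ ≤ 1 * ‖u‖ :=
              mul_le_mul_of_nonneg_right (V.orthogonalProjectionOnto_norm_le) (norm_nonneg u)
          _ = ‖u‖ := one_mul _
      have hνball : ∀ (z : Euc (d + 1)) (ρ : ℝ), 0 < ρ →
          ν (ball z ρ) ≤ μ (ball (↑(V.orthogonalProjectionOnto z)) ρ) := by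
        intro z ρ hρ
        rw [hν, Measure.sum_apply _ measurableSet_ball]
        have hsub : ∀ n, ((μ.restrict (A n)).map (T n)) (ball z ρ) ≤
            μ (A n ∩ ball (↑(V.orthogonalProjectionOnto z)) ρ) := by
          intro n
          rw [Measure.map_apply (hTmeas n) measurableSet_ball,
            Measure.restrict_apply ((hTmeas n) measurableSet_ball)]
          have hsub2 : T n ⁻¹' ball z ρ ∩ A n ⊆
              (A n ∩ ball (↑(V.orthogonalProjectionOnto z)) ρ) ∪ (V : Set (Euc (d + 1)))ᶜ := by
            intro z₁ hz₁
            by_cases hzV : z₁ ∈ (V : Set (Euc (d + 1)))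
            · left
              refine ⟨hz₁.2, ?_⟩
              have h1 : ‖z₁ + (w (idx n) : Euc (d + 1)) - z‖ < ρ := by
                have h1' := hz₁.1
                simp only [hT, mem_preimage, mem_ball, dist_eq_norm] at h1'
                exact h1'
              have h2 : ((V.orthogonalProjectionOnto (z₁ + (w (idx n) : Euc (d + 1)) - z)) :
                  Euc (d + 1)) = z₁ - (V.orthogonalProjectionOnto z : Euc (d + 1)) := by
                rw [map_sub, map_add]
                have e1 : ((V.orthogonalProjectionOnto z₁ : V) : Euc (d + 1)) = z₁ :=
                  Submodule.starProjection_eq_self_iff.2 hzV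
                have e2 : V.orthogonalProjectionOnto ((w (idx n) : Euc (d + 1))) = 0 :=
                  Submodule.orthogonalProjectionOnto_apply_of_mem_orthogonal (w (idx n)).2
                rw [Submodule.coe_sub, Submodule.coe_add, e1, e2, Submodule.coe_zero, add_zero]
              rw [mem_ball, dist_eq_norm]
              calc ‖z₁ - (V.orthogonalProjectionOnto z : Euc (d + 1))‖
                  = ‖((V.orthogonalProjectionOnto (z₁ + (w (idx n) : Euc (d + 1)) - z)) :
                      Euc (d + 1))‖ := by rw [h2]
                _ ≤ ‖z₁ + (w (idx n) : Euc (d + 1)) - z‖ := hproj _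
                _ < ρ := h1
            · right; exact hzV
          calc μ (T n ⁻¹' ball z ρ ∩ A n)
              ≤ μ ((A n ∩ ball (↑(V.orthogonalProjectionOnto z)) ρ) ∪ (V : Set (Euc (d + 1)))ᶜ) :=
                measure_mono hsub2
            _ ≤ μ (A n ∩ ball (↑(V.orthogonalProjectionOnto z)) ρ) + μ ((V : Set (Euc (d + 1)))ᶜ) :=
                measure_union_le _ _
            _ = μ (A n ∩ ball (↑(V.orthogonalProjectionOnto z)) ρ) := by rw [hμV, add_zero]
        calc ∑' n, ((μ.restrict (A n)).map (T n)) (ball z ρ)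
            ≤ ∑' n, μ (A n ∩ ball (↑(V.orthogonalProjectionOnto z)) ρ) := ENNReal.tsum_le_tsum hsub
          _ = μ (⋃ n, A n ∩ ball (↑(V.orthogonalProjectionOnto z)) ρ) := by
              rw [measure_iUnion
                (fun i j hij => Disjoint.mono inter_subset_left inter_subset_left (hAdisj hij))
                (fun n => (hAmeas n).inter measurableSet_ball)]
          _ ≤ μ (ball (↑(V.orthogonalProjectionOnto z)) ρ) :=
              measure_mono (iUnion_subset fun n => inter_subset_right)
      obtain ⟨C₀, hC₀⟩ := hμdim
      have hνdim : IsAlphaDim α ν :=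
        ⟨C₀, fun z ρ hρ => le_trans (hνball z ρ hρ) (hC₀ _ ρ hρ)⟩
      have hνconst : dimConst α ν ≤ dimConst α μ := by
        simp only [dimConst]
        refine iSup_le fun z => iSup_le fun ρ => iSup_le fun hρ => ?_
        refine le_trans (ENNReal.div_le_div_right (hνball z ρ hρ) _) ?_
        exact le_iSup_of_le (↑(V.orthogonalProjectionOnto z))
          (le_iSup_of_le ρ (le_iSup_of_le hρ le_rfl))
      have happ := hbound ν hνdim f hf hfc
      rw [← hAfdef] at happ
      have hgm : Measurable fun z => S.indicator (fun z' => ((‖Af z'‖₊ : ℝ≥0∞)) ^ q) z :=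
        ((hAfc.measurable.nnnorm.coe_nnreal_ennreal).pow_const q).indicator hSmeas
      have hmain : ∫⁻ z₁, (⨆ n, ⨆ (_ : n ≤ N), ENNReal.ofReal (Fr n z₁) ^ q) ∂μ ≤
          ∫⁻ z in S, (‖Af z‖₊ : ℝ≥0∞) ^ q ∂ν := by
        have hlhs : ∫⁻ z₁, (⨆ n, ⨆ (_ : n ≤ N), ENNReal.ofReal (Fr n z₁) ^ q) ∂μ =
            ∑' n, ∫⁻ z₁ in A n, (⨆ m_, ⨆ (_ : m_ ≤ N), ENNReal.ofReal (Fr m_ z₁) ^ q) ∂μ := by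
          rw [← setLIntegral_univ, ← hAunion, lintegral_iUnion hAmeas hAdisj]
        have hrhs : ∫⁻ z in S, (‖Af z‖₊ : ℝ≥0∞) ^ q ∂ν =
            ∑' n, ∫⁻ z₁ in A n,
              S.indicator (fun z => ((‖Af z‖₊ : ℝ≥0∞)) ^ q) (T n z₁) ∂μ := by
          rw [hν, Measure.restrict_sum _ hSmeas, lintegral_sum_measure]
          refine tsum_congr fun n => ?_
          rw [← lintegral_indicator hSmeas, lintegral_map hgm (hTmeas n)]
        rw [hlhs, hrhs]
        refine ENNReal.tsum_le_tsum fun n => ?_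
        refine setLIntegral_mono (hgm.comp (hTmeas n)) fun z₁ hz₁ => ?_
        have hzB : z₁ ∈ B n := hAB n hz₁
        refine iSup_le fun m_ => iSup_le fun hm_ => ?_
        have h1 : Fr m_ z₁ ≤ Fr (idx n) z₁ := hzB m_ hm_
        refine le_trans (ENNReal.rpow_le_rpow (ENNReal.ofReal_le_ofReal h1) hq0.le) ?_
        by_cases hmem : z₁ + (w (idx n) : Euc (d + 1)) ∈ E
        · have hmemS : T n z₁ ∈ S := hES hmem
          rw [Set.indicator_of_mem hmemS]
          have hFrval : Fr (idx n) z₁ = |Af (T n z₁)| := by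
            simp only [hFr, hT]
            rw [Set.indicator_of_mem hmem]
          rw [hFrval, ← Real.enorm_eq_ofReal_abs, enorm_eq_nnnorm]
        · have hFrval : Fr (idx n) z₁ = 0 := by
            simp only [hFr]
            rw [Set.indicator_of_notMem hmem]
          rw [hFrval]
          simp [ENNReal.zero_rpow_of_pos hq0]
      have hceq : ∫⁻ z in S, (‖Af z‖₊ : ℝ≥0∞) ^ q ∂ν =
          eLpNorm Af (ENNReal.ofReal q) (ν.restrict S) ^ q := by
        rw [eLpNorm_eq_lintegral_rpow_enorm_toReal hofq0 ENNReal.ofReal_ne_top,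
          ENNReal.toReal_ofReal hq0.le, ← ENNReal.rpow_mul, one_div_mul_cancel hqne,
          ENNReal.rpow_one]; rfl
      calc ∫⁻ z₁, (⨆ n, ⨆ (_ : n ≤ N), ENNReal.ofReal (Fr n z₁) ^ q) ∂μ
          ≤ ∫⁻ z in S, (‖Af z‖₊ : ℝ≥0∞) ^ q ∂ν := hmain
        _ = eLpNorm Af (ENNReal.ofReal q) (ν.restrict S) ^ q := hceq
        _ ≤ ((C : ℝ≥0∞) * dimConst α ν ^ (1 / q) * eLpNorm f (ENNReal.ofReal p) volume) ^ q :=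
            ENNReal.rpow_le_rpow happ hq0.le
        _ ≤ R ^ q := by
            refine ENNReal.rpow_le_rpow ?_ hq0.le
            rw [hR]
            exact mul_le_mul'
              (mul_le_mul' le_rfl (ENNReal.rpow_le_rpow hνconst (by positivity))) le_rfl
    -- Step 4 : assembly
    rw [eLpNorm_eq_lintegral_rpow_enorm_toReal hofq0 ENNReal.ofReal_ne_top,
      ENNReal.toReal_ofReal hq0.le]
    have hmono : ∫⁻ z₁, (‖⨆ z₂ : V.orthogonal,
        E.indicator (fun z => |Af z|) (z₁ + (z₂ : Euc (d + 1)))‖₊ : ℝ≥0∞) ^ q ∂μ ≤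
        ∫⁻ z₁, (⨆ n, ENNReal.ofReal (Fr n z₁) ^ q) ∂μ := by
      refine lintegral_mono fun z₁ => ?_
      exact le_trans (ENNReal.rpow_le_rpow (key1 z₁) hq0.le)
        (hsup_rpow fun n => ENNReal.ofReal (Fr n z₁))
    have hswap : ∫⁻ z₁, (⨆ n, ENNReal.ofReal (Fr n z₁) ^ q) ∂μ ≤ R ^ q := by
      have hptw : (fun z₁ => ⨆ n, ENNReal.ofReal (Fr n z₁) ^ q) =
          fun z₁ => ⨆ N, ⨆ n, ⨆ (_ : n ≤ N), ENNReal.ofReal (Fr n z₁) ^ q := by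
        funext z₁
        apply le_antisymm
        · exact iSup_le fun n => le_iSup_of_le n (le_iSup_of_le n (le_iSup_of_le le_rfl le_rfl))
        · exact iSup_le fun N => iSup_le fun n => iSup_le fun _ =>
            le_iSup (fun n => ENNReal.ofReal (Fr n z₁) ^ q) n
      rw [hptw]
      rw [lintegral_iSup]
      · exact iSup_le keyN
      · intro N
        exact Measurable.iSup fun n => Measurable.iSup fun _ =>
          (ENNReal.measurable_ofReal.comp (hFrmeas n)).pow_const q
      · intro N N' hNN'
        intro z₁
        exact iSup_mono fun n => iSup_le fun h => le_iSup_of_le (le_trans h hNN') le_rfl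
    calc (∫⁻ z₁, (‖⨆ z₂ : V.orthogonal,
          E.indicator (fun z => |Af z|) (z₁ + (z₂ : Euc (d + 1)))‖₊ : ℝ≥0∞) ^ q ∂μ) ^ (1 / q)
        ≤ (R ^ q) ^ (1 / q) := ENNReal.rpow_le_rpow (le_trans hmono hswap) (by positivity)
      _ = R := by rw [← ENNReal.rpow_mul, mul_one_div_cancel hqne, ENNReal.rpow_one]
end
end
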